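/- Let k be an infinite field and N ≥ 1. A polynomial g ∈ MvPolynomial (Fin N) k vanishes at every diagonal point — i.e., (MvPolynomial.eval (fun _ => α)) g = 0 for every α : k — if and only if g belongs to the ideal J = Ideal.span {X i - X j : i, j ∈ Fin N}. In other words, the ideal I(S) of all polynomials vanishing on the diagonal subspace S equals J. (The paper derives this from Hilbert's Strong Nullstellensatz together with the primality of J.) -/

import Mathlib

/-! Substituting one fixed variable `X i₀` for every variable changes a polynomial only by an
element of `J`, since each `X i` is congruent to `X i₀` modulo `J`. The substituted polynomial
is `t ↦ g (t, …, t)` read in the variable `X i₀`; if `g` vanishes on the diagonal, the substituted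
polynomial vanishes on all of `k^N` and is therefore zero, the field being infinite. -/

open MvPolynomial

namespace MvPolynomial

variable {σ R : Type*}

theorem sub_aeval_mem_of_forall_X_sub_mem [CommRing R] {I : Ideal (MvPolynomial σ R)}
    (f : σ → MvPolynomial σ R) (hf : ∀ i, X i - f i ∈ I) (g : MvPolynomial σ R) :
    g - aeval f g ∈ I := by
  have hcomp : (Ideal.Quotient.mkₐ R I).comp (aeval f) = Ideal.Quotient.mkₐ R I :=
    algHom_ext fun i => by
      simpa [Ideal.Quotient.mkₐ_eq_mk] using (Ideal.Quotient.eq.mpr (hf i)).symm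
  rw [← Ideal.Quotient.eq, ← Ideal.Quotient.mkₐ_eq_mk R, ← AlgHom.comp_apply, hcomp]

theorem sub_rename_const_mem_span_X_sub_X [CommRing R] (i₀ : σ) (g : MvPolynomial σ R) :
    g - rename (fun _ => i₀) g ∈ Ideal.span {p | ∃ i j : σ, p = X i - X j} := by
  rw [rename_eq_aeval]
  refine sub_aeval_mem_of_forall_X_sub_mem _ (fun i => Ideal.subset_span ?_) g
  exact ⟨i, i₀, rfl⟩

theorem rename_const_eq_zero_of_eval_const_eq_zero [CommRing R] [IsDomain R] [Infinite R]
    (i₀ : σ) {g : MvPolynomial σ R} (hg : ∀ α : R, eval (fun _ => α) g = 0) :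
    rename (fun _ => i₀) g = 0 :=
  funext fun x => by simpa [eval_rename, Function.comp_def] using hg (x i₀)

theorem span_X_sub_X_le_ker_eval_const [CommRing R] (α : R) :
    Ideal.span {p : MvPolynomial σ R | ∃ i j : σ, p = X i - X j} ≤
      RingHom.ker (eval fun _ => α) :=
  Ideal.span_le.mpr fun _ ⟨i, j, hp⟩ => by simp [hp]

end MvPolynomial

theorem vanishing_ideal_of_diagonal
    (k : Type*) [Field k] [Infinite k] (N : ℕ) (hN : 1 ≤ N)
    (J : Ideal (MvPolynomial (Fin N) k))
    (hJ : J = Ideal.span {g | ∃ i j : Fin N, g = X i - X j})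
    (g : MvPolynomial (Fin N) k) :
    (∀ α : k, MvPolynomial.eval (fun _ => α) g = 0) ↔ g ∈ J := by
  subst hJ
  refine ⟨fun hg => ?_, fun hg α => span_X_sub_X_le_ker_eval_const α hg⟩
  have i₀ : Fin N := ⟨0, hN⟩
  simpa [rename_const_eq_zero_of_eval_const_eq_zero i₀ hg] using
    sub_rename_const_mem_span_X_sub_X i₀ g
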